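/- Let 𝒯, Ω > 0, let N₁, N₂ ∈ ℕ, set L₁ = 2N₁ + 1, L₂ = 2N₂ + 1, and let w(x) = Σ_{k = −N₁}^{N₁} w_k e^{2πi Ω k x / L₁} with w_k ∈ ℂ. Let H = Σ_{s=1}^{S} η_s M_{ν_s} T_{τ_s} with η_s ∈ ℂ and τ_s, ν_s ∈ ℝ. Then for every j = −N₂, …, N₂ and x_j = 𝒯 j / L₂, the sample H w(x_j) = Σ_{s=1}^S η_s e^{2πi ν_s x_j} w(x_j − τ_s) satisfies H w(x_j) = Σ_{u = −N₁}^{N₁} Σ_{v = −N₂}^{N₂} e^{2πi x_j v / 𝒯} · w(x_j − u/Ω) · Σ_{s=1}^{S} η_s · (1/(L₁ L₂)) · D_{N₁}((u − Ω τ_s)/L₁) · D_{N₂}((v − 𝒯 ν_s)/L₂). -/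

import Mathlib

/-- The `N`-th Dirichlet kernel `D_N(x) = Σ_{k = −N}^{N} e^{2πi k x}`. -/
noncomputable def dirichletKernel (N : ℕ) (x : ℝ) : ℂ :=
  ∑ k ∈ Finset.Icc (-(N : ℤ)) (N : ℤ), Complex.exp (2 * Real.pi * Complex.I * k * x)

/-!
With `L = 2N + 1`, the values of `D_N` at the points `n / L` are a geometric sum over a full
period of an `L`-th root of unity: `D_N(n/L) = L` if `L ∣ n` and `0` otherwise. Hence the
shifted kernel `u ↦ D_N((u - a)/L)`, sampled at `u = -N, …, N`, reproduces every exponential of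
degree at most `N`: `Σ_u e^{2πi k u/L} D_N((u - a)/L) = L e^{2πi k a/L}`. In the variable `u`
this turns the band-limited `w(x_j - u/Ω)` into `L₁ w(x_j - τ_s)`; in the variable `v`, where
`e^{2πi x_j v/𝒯} = e^{2πi j v/L₂}`, it turns the modulation into `L₂ e^{2πi ν_s x_j}`. The
formula is the product of these two identities, summed over `s`.
-/

open Finset Complex
open scoped Real

theorem sum_zpow_Ico_eq_zero {K : Type*} [DivisionRing K] {z : K} {n : ℕ} (hz : z ≠ 1)
    (hzn : z ^ n = 1) (a : ℤ) : ∑ k ∈ Ico a (a + n), z ^ k = 0 := by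
  rcases n.eq_zero_or_pos with rfl | hn
  · simp
  have hz0 : z ≠ 0 := by rintro rfl; simp [zero_pow hn.ne'] at hzn
  rw [Int.Ico_eq_finset_map, sum_map]
  simp only [Function.Embedding.trans_apply, Nat.castEmbedding_apply, addLeftEmbedding_apply,
    add_sub_cancel_left, Int.toNat_natCast, zpow_add₀ hz0, zpow_natCast, ← mul_sum,
    geom_sum_eq hz, hzn, sub_self, zero_div, mul_zero]

theorem dirichletKernel_intCast_div {N L : ℕ} (hL : L = 2 * N + 1) (n : ℤ) :
    dirichletKernel N (n / L) = if (L : ℤ) ∣ n then (L : ℂ) else 0 := by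
  have hζ := isPrimitiveRoot_exp L (by omega)
  have hterm : ∀ k : ℤ,
      exp (2 * π * I * k * ((n / L : ℝ) : ℂ)) = (exp (2 * π * I / L) ^ n) ^ k := by
    intro k
    rw [← zpow_mul, ← exp_int_mul]
    congr 1
    push_cast
    ring
  simp only [dirichletKernel, hterm]
  split_ifs with hdvd
  · simp only [(hζ.zpow_eq_one_iff_dvd n).2 hdvd, one_zpow, sum_const, Int.card_Icc,
      nsmul_eq_mul, mul_one]
    congr 1
    omega
  · have hIcc : Icc (-(N : ℤ)) N = Ico (-(N : ℤ)) (-N + L) := by ext; simp; omega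
    rw [hIcc]
    refine sum_zpow_Ico_eq_zero (mt (hζ.zpow_eq_one_iff_dvd n).1 hdvd) ?_ _
    rw [← zpow_natCast, ← zpow_mul, mul_comm n, zpow_mul, zpow_natCast, hζ.pow_eq_one, one_zpow]

theorem sum_exp_mul_dirichletKernel {N L : ℕ} (hL : L = 2 * N + 1) {k : ℤ}
    (hk : k ∈ Icc (-(N : ℤ)) N) (a : ℝ) :
    ∑ u ∈ Icc (-(N : ℤ)) N, exp (2 * π * I * k * u / L) * dirichletKernel N ((u - a) / L) =
      L * exp (2 * π * I * k * a / L) := by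
  have hdvd_iff : ∀ m ∈ Icc (-(N : ℤ)) N, (L : ℤ) ∣ (k + m : ℤ) ↔ m = -k := by
    intro m hm
    rw [mem_Icc] at hk hm
    refine ⟨fun h => ?_, fun h => by simp [h]⟩
    have := Int.eq_zero_of_abs_lt_dvd h (abs_lt.2 ⟨by omega, by omega⟩)
    omega
  calc
    _ = ∑ m ∈ Icc (-(N : ℤ)) N,
          exp (-(2 * π * I * m * a / L)) * dirichletKernel N ((k + m : ℤ) / L) := by
      simp only [dirichletKernel, mul_sum]
      rw [sum_comm]
      refine sum_congr rfl fun m _ => sum_congr rfl fun u _ => ?_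
      rw [← exp_add, ← exp_add]
      congr 1
      push_cast
      ring
    _ = ∑ m ∈ Icc (-(N : ℤ)) N,
          exp (-(2 * π * I * m * a / L)) * if m = -k then (L : ℂ) else 0 := by
      refine sum_congr rfl fun m hm => ?_
      rw [dirichletKernel_intCast_div hL, if_congr (hdvd_iff m hm) rfl rfl]
    _ = L * exp (2 * π * I * k * a / L) := by
      have hnk : -k ∈ Icc (-(N : ℤ)) N := by rw [mem_Icc] at hk ⊢; omega
      simp only [mul_ite, mul_zero, sum_ite_eq', hnk, if_true, Int.cast_neg, mul_neg, neg_mul,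
        neg_div, neg_neg]
      ring

theorem sum_translate_mul_dirichletKernel {N L : ℕ} (hL : L = 2 * N + 1) {Ω : ℝ} (hΩ : Ω ≠ 0)
    (c : ℤ → ℂ) (w : ℝ → ℂ)
    (hw : ∀ x : ℝ, w x = ∑ k ∈ Icc (-(N : ℤ)) N, c k * exp (2 * π * I * Ω * k * x / L))
    (x b : ℝ) :
    ∑ u ∈ Icc (-(N : ℤ)) N, w (x - u / Ω) * dirichletKernel N ((u - Ω * b) / L) =
      L * w (x - b) := by
  have hshift : ∀ (k : ℤ) (y : ℝ), exp (2 * π * I * Ω * k * (x - y : ℝ) / L) =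
      exp (2 * π * I * Ω * k * x / L) * exp (2 * π * I * (-k : ℤ) * (Ω * y : ℝ) / L) := by
    intro k y
    rw [← exp_add]
    congr 1
    push_cast
    ring
  calc
    _ = ∑ u ∈ Icc (-(N : ℤ)) N, ∑ k ∈ Icc (-(N : ℤ)) N, c k * exp (2 * π * I * Ω * k * x / L) *
          (exp (2 * π * I * (-k : ℤ) * u / L) * dirichletKernel N ((u - Ω * b) / L)) := by
      refine sum_congr rfl fun u _ => ?_
      rw [hw, sum_mul]
      refine sum_congr rfl fun k _ => ?_
      rw [hshift, mul_div_cancel₀ _ hΩ, ofReal_intCast]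
      ring
    _ = ∑ k ∈ Icc (-(N : ℤ)) N, c k * exp (2 * π * I * Ω * k * x / L) *
          (L * exp (2 * π * I * (-k : ℤ) * (Ω * b : ℝ) / L)) := by
      rw [sum_comm]
      refine sum_congr rfl fun k hk => ?_
      have hnk : -k ∈ Icc (-(N : ℤ)) N := by rw [mem_Icc] at hk ⊢; omega
      rw [← mul_sum, sum_exp_mul_dirichletKernel hL hnk]
    _ = L * w (x - b) := by
      rw [hw, mul_sum]
      refine sum_congr rfl fun k _ => ?_
      rw [hshift]
      ring

/-- **Sampling formula for translation-modulation operators.**  Let `𝒯, Ω > 0`,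
`N₁, N₂ ∈ ℕ`, `L₁ = 2N₁+1`, `L₂ = 2N₂+1`, let
`w(x) = Σ_{k=−N₁}^{N₁} w_k e^{2πi Ω k x / L₁}`, and let
`H = Σ_{s=1}^{S} η_s M_{ν_s} T_{τ_s}`, acting by
`H w(x) = Σ_s η_s e^{2πi ν_s x} w(x − τ_s)`.  Then for every `j = −N₂, …, N₂` and
`x_j = 𝒯 j / L₂`,
`H w(x_j) = Σ_{u=−N₁}^{N₁} Σ_{v=−N₂}^{N₂} e^{2πi x_j v / 𝒯} · w(x_j − u/Ω) ·
  Σ_{s=1}^{S} η_s (1/(L₁ L₂)) D_{N₁}((u − Ω τ_s)/L₁) D_{N₂}((v − 𝒯 ν_s)/L₂)`. -/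
theorem sampling_formula_channel_operator
    (𝒯 Ω : ℝ) (h𝒯 : 0 < 𝒯) (hΩ : 0 < Ω) (N₁ N₂ : ℕ)
    (L₁ L₂ : ℕ) (hL₁ : L₁ = 2 * N₁ + 1) (hL₂ : L₂ = 2 * N₂ + 1)
    (wc : ℤ → ℂ) (w : ℝ → ℂ)
    (hw : ∀ x : ℝ, w x = ∑ k ∈ Finset.Icc (-(N₁ : ℤ)) (N₁ : ℤ),
      wc k * Complex.exp (2 * Real.pi * Complex.I * Ω * k * x / L₁))
    (S : ℕ) (η : Fin S → ℂ) (τ ν : Fin S → ℝ) :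
    ∀ j ∈ Finset.Icc (-(N₂ : ℤ)) (N₂ : ℤ),
      (∑ s : Fin S, η s * Complex.exp (2 * Real.pi * Complex.I * ν s * (𝒯 * j / L₂)) *
          w (𝒯 * j / L₂ - τ s)) =
        ∑ u ∈ Finset.Icc (-(N₁ : ℤ)) (N₁ : ℤ), ∑ v ∈ Finset.Icc (-(N₂ : ℤ)) (N₂ : ℤ),
          Complex.exp (2 * Real.pi * Complex.I * (𝒯 * j / L₂) * v / 𝒯) *
            w (𝒯 * j / L₂ - u / Ω) *
            ∑ s : Fin S, η s * ((1 / ((L₁ : ℂ) * (L₂ : ℂ))) *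
              dirichletKernel N₁ ((u - Ω * τ s) / L₁) *
              dirichletKernel N₂ ((v - 𝒯 * ν s) / L₂)) := by
  intro j hj
  have hL₁0 : (L₁ : ℂ) ≠ 0 := by rw [hL₁]; exact_mod_cast (2 * N₁).succ_ne_zero
  have hL₂0 : (L₂ : ℂ) ≠ 0 := by rw [hL₂]; exact_mod_cast (2 * N₂).succ_ne_zero
  have hw_samples : ∀ s, ∑ u ∈ Icc (-(N₁ : ℤ)) N₁,
      w (𝒯 * j / L₂ - u / Ω) * dirichletKernel N₁ ((u - Ω * τ s) / L₁) =
        L₁ * w (𝒯 * j / L₂ - τ s) :=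
    fun s => sum_translate_mul_dirichletKernel hL₁ hΩ.ne' wc w hw _ _
  have hmod_samples : ∀ s, ∑ v ∈ Icc (-(N₂ : ℤ)) N₂,
      exp (2 * π * I * (𝒯 * j / L₂) * v / 𝒯) * dirichletKernel N₂ ((v - 𝒯 * ν s) / L₂) =
        L₂ * exp (2 * π * I * ν s * (𝒯 * j / L₂)) := by
    intro s
    have h𝒯0 : (𝒯 : ℂ) ≠ 0 := by exact_mod_cast h𝒯.ne'
    convert sum_exp_mul_dirichletKernel hL₂ hj (𝒯 * ν s) using 3
    · congr 1
      field_simp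
    · push_cast
      ring
  calc
    _ = ∑ s : Fin S, η s * (1 / ((L₁ : ℂ) * L₂)) *
          ((L₁ * w (𝒯 * j / L₂ - τ s)) * (L₂ * exp (2 * π * I * ν s * (𝒯 * j / L₂)))) := by
      refine sum_congr rfl fun s _ => ?_
      field_simp
    _ = _ := by
      simp_rw [← hw_samples, ← hmod_samples, sum_mul_sum, mul_sum]
      rw [sum_comm]
      refine sum_congr rfl fun u _ => ?_
      rw [sum_comm]
      refine sum_congr rfl fun v _ => sum_congr rfl fun s _ => ?_
      ring
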